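/- arXiv:1605.02437 — 3 statements merged into one kernel-verified Lean document; each statement's English description precedes it below -/
import Mathlib

section
/- Let Ω ⊆ ℝ^d be open, A ∈ C²(Ω̄; ℝ^d), with magnetic matrix B_{jk} = ∂_j A_k − ∂_k A_j, and set m_{B,V} := √(1+|B|²+|V|²) where |B|² = Σ_{j,k} B_{jk}², and Ψ_{jk} := B_{jk}/m_{B,V}. Then for every u ∈ C_c^∞(Ω): ∫_Ω (|B|²/m_{B,V}) |u|² dx ≤ 3d ‖(-i∇+A)u‖² + ‖|∇Ψ| u‖², where |∇Ψ|² = Σ_{j,k} |∇Ψ_{jk}|². -/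
open MeasureTheory Complex

noncomputable section

/-- The magnetic momentum operator `P_j = -i∂_j + A_j`. -/
def magD {d : ℕ} (A : (Fin d → ℝ) → (Fin d → ℝ)) (j : Fin d)
    (u : (Fin d → ℝ) → ℂ) (x : Fin d → ℝ) : ℂ :=
  -Complex.I * fderiv ℝ u x (Pi.single j 1) + (A x j : ℂ) * u x

/-- Partial derivative of a real-valued function. -/
def pdR {d : ℕ} (j : Fin d) (f : (Fin d → ℝ) → ℝ) (x : Fin d → ℝ) : ℝ :=
  fderiv ℝ f x (Pi.single j 1)

/-- The magnetic matrix `B_{jk} = ∂_j A_k − ∂_k A_j`. -/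
def Bmat {d : ℕ} (A : (Fin d → ℝ) → (Fin d → ℝ)) (j k : Fin d)
    (x : Fin d → ℝ) : ℝ :=
  pdR j (fun y => A y k) x - pdR k (fun y => A y j) x

/-- `|B(x)|² = ∑_{j,k} B_{jk}(x)²`. -/
def normBsq {d : ℕ} (A : (Fin d → ℝ) → (Fin d → ℝ)) (x : Fin d → ℝ) : ℝ :=
  ∑ j, ∑ k, (Bmat A j k x) ^ 2

/-- `m_{B,V} = √(1 + |B|² + |V|²)`. -/
def mBV {d : ℕ} (A : (Fin d → ℝ) → (Fin d → ℝ)) (V : (Fin d → ℝ) → ℂ)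
    (x : Fin d → ℝ) : ℝ :=
  Real.sqrt (1 + normBsq A x + ‖V x‖ ^ 2)

/-- `Φ = V₂ / m_{B,V}`. -/
def PhiW {d : ℕ} (A : (Fin d → ℝ) → (Fin d → ℝ)) (V : (Fin d → ℝ) → ℂ)
    (x : Fin d → ℝ) : ℝ :=
  (V x).im / mBV A V x

/-- `|∇Φ|²`. -/
def gradPhiSq {d : ℕ} (A : (Fin d → ℝ) → (Fin d → ℝ)) (V : (Fin d → ℝ) → ℂ)
    (x : Fin d → ℝ) : ℝ :=
  ‖fderiv ℝ (PhiW A V) x‖ ^ 2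

/-- `|∇Ψ|² = ∑_{j,k} |∇(B_{jk}/m_{B,V})|²`. -/
def gradPsiSq {d : ℕ} (A : (Fin d → ℝ) → (Fin d → ℝ)) (V : (Fin d → ℝ) → ℂ)
    (x : Fin d → ℝ) : ℝ :=
  ∑ j, ∑ k, ‖fderiv ℝ (fun y => Bmat A j k y / mBV A V y) x‖ ^ 2

/-- `|∇B|² = ∑_{j,k} |∇B_{jk}|²`. -/
def gradBnormSq {d : ℕ} (A : (Fin d → ℝ) → (Fin d → ℝ)) (x : Fin d → ℝ) : ℝ :=
  ∑ j, ∑ k, ‖fderiv ℝ (Bmat A j k) x‖ ^ 2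

/-- A test function: smooth with compact support contained in `Ω`. -/
def IsTest {d : ℕ} (Ω : Set (Fin d → ℝ)) (u : (Fin d → ℝ) → ℂ) : Prop :=
  ContDiff ℝ (⊤ : ℕ∞) u ∧ HasCompactSupport u ∧ tsupport u ⊆ Ω



/-! ### Auxiliary lemmas -/

section Aux

variable {d : ℕ} {A : (Fin d → ℝ) → (Fin d → ℝ)} {V : (Fin d → ℝ) → ℂ}
  {u : (Fin d → ℝ) → ℂ}

/-- `G_k = Re(ū · P_k u)`. -/
def Gfun {d : ℕ} (A : (Fin d → ℝ) → (Fin d → ℝ)) (u : (Fin d → ℝ) → ℂ)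
    (k : Fin d) (y : Fin d → ℝ) : ℝ :=
  ((starRingEnd ℂ) (u y) * magD A k u y).re

lemma integral_pd_eq_zero {d : ℕ} (f : (Fin d → ℝ) → ℝ) (hf : ContDiff ℝ 1 f)
    (hsupp : HasCompactSupport f) (v : Fin d → ℝ) :
    ∫ x, fderiv ℝ f x v = 0 := by
  obtain ⟨C, hC⟩ := hf.lipschitzWith_of_hasCompactSupport hsupp one_ne_zero
  have h := LipschitzWith.integral_lineDeriv_mul_eq (f := fun _ => (1:ℝ))
    (g := f) (μ := volume) (LipschitzWith.const 1) hC hsupp (-v)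
  have hz : ∀ (x : Fin d → ℝ) (w : Fin d → ℝ), lineDeriv ℝ (fun _ => (1:ℝ)) x w = 0 :=
    fun x w => by rw [(differentiableAt_const (1:ℝ)).lineDeriv_eq_fderiv]; simp
  simp only [hz, zero_mul, integral_zero, neg_neg, mul_one] at h
  have h2 : ∀ x, lineDeriv ℝ f x v = fderiv ℝ f x v := fun x =>
    (hf.differentiable one_ne_zero x).lineDeriv_eq_fderiv
  rw [← integral_congr_ae (Filter.Eventually.of_forall h2)]
  exact h.symm

lemma integral_mul_pd {d : ℕ} (f g : (Fin d → ℝ) → ℝ) (hf : ContDiff ℝ 1 f)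
    (hg : ContDiff ℝ 1 g) (hgs : HasCompactSupport g) (v : Fin d → ℝ) :
    ∫ x, f x * fderiv ℝ g x v = - ∫ x, fderiv ℝ f x v * g x := by
  have hfg : ContDiff ℝ 1 (fun x => f x * g x) := hf.mul hg
  have hfgs : HasCompactSupport (fun x => f x * g x) := hgs.mul_left
  have h0 : ∫ x, fderiv ℝ (fun x => f x * g x) x v = 0 :=
    integral_pd_eq_zero _ hfg hfgs v
  have hpt : ∀ x, fderiv ℝ (fun x => f x * g x) x v
      = fderiv ℝ f x v * g x + f x * fderiv ℝ g x v := by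
    intro x
    rw [fderiv_fun_mul (hf.differentiable one_ne_zero x) (hg.differentiable one_ne_zero x)]
    simp [ContinuousLinearMap.add_apply, ContinuousLinearMap.smul_apply, smul_eq_mul]
    ring
  rw [integral_congr_ae (Filter.Eventually.of_forall hpt)] at h0
  have hcf : Continuous fun x => fderiv ℝ f x v :=
    (hf.continuous_fderiv one_ne_zero).clm_apply continuous_const
  have hcg : Continuous fun x => fderiv ℝ g x v :=
    (hg.continuous_fderiv one_ne_zero).clm_apply continuous_const
  have i1 : Integrable fun x => fderiv ℝ f x v * g x :=
    ((hcf.mul (hg.continuous)).integrable_of_hasCompactSupport hgs.mul_left)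
  have i2 : Integrable fun x => f x * fderiv ℝ g x v := by
    apply (hf.continuous.mul hcg).integrable_of_hasCompactSupport
    apply HasCompactSupport.intro hgs
    intro x hx
    have h2 : fderiv ℝ g x = 0 := by
      have : g =ᶠ[nhds x] 0 := notMem_tsupport_iff_eventuallyEq.1 hx
      rw [this.fderiv_eq]; exact fderiv_const_apply 0
    simp [h2]
  rw [integral_add i1 i2] at h0
  linarith

lemma contDiff_Acomp (hA : ContDiff ℝ 2 A) (k : Fin d) :
    ContDiff ℝ 2 (fun y => A y k) :=
  (ContinuousLinearMap.proj (R := ℝ) (φ := fun _ : Fin d => ℝ) k).contDiff.comp hA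

lemma contDiff_pdA (hA : ContDiff ℝ 2 A) (j k : Fin d) :
    ContDiff ℝ 1 (fun y => pdR j (fun z => A z k) y) := by
  have h1 : ContDiff ℝ 1 (fderiv ℝ (fun z => A z k)) :=
    (contDiff_Acomp hA k).fderiv_right (by norm_num)
  exact h1.clm_apply contDiff_const

lemma contDiff_B (hA : ContDiff ℝ 2 A) (j k : Fin d) :
    ContDiff ℝ 1 (Bmat A j k) :=
  (contDiff_pdA hA j k).sub (contDiff_pdA hA k j)

lemma contDiff_normBsq (hA : ContDiff ℝ 2 A) : ContDiff ℝ 1 (normBsq A) := by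
  unfold normBsq
  exact ContDiff.sum fun j _ => ContDiff.sum fun k _ => (contDiff_B hA j k).pow 2

lemma contDiff_normVsq (hV : ContDiff ℝ 1 V) :
    ContDiff ℝ 1 (fun x => ‖V x‖ ^ 2) := by
  have h : ∀ x, ‖V x‖ ^ 2 = (V x).re ^ 2 + (V x).im ^ 2 := fun x => by
    rw [Complex.sq_norm, Complex.normSq_apply]; ring
  simp only [h]
  exact ((Complex.reCLM.contDiff.comp hV).pow 2).add
    ((Complex.imCLM.contDiff.comp hV).pow 2)

lemma normBsq_nonneg (x : Fin d → ℝ) : 0 ≤ normBsq A x :=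
  Finset.sum_nonneg fun j _ => Finset.sum_nonneg fun k _ => sq_nonneg _

lemma one_le_mBV (x : Fin d → ℝ) : 1 ≤ mBV A V x := by
  rw [mBV, Real.one_le_sqrt]
  have := normBsq_nonneg (A := A) x
  have := sq_nonneg ‖V x‖
  linarith

lemma mBV_pos (x : Fin d → ℝ) : 0 < mBV A V x :=
  lt_of_lt_of_le one_pos (one_le_mBV x)

lemma sq_mBV (x : Fin d → ℝ) :
    mBV A V x ^ 2 = 1 + normBsq A x + ‖V x‖ ^ 2 := by
  rw [mBV, Real.sq_sqrt]
  have := normBsq_nonneg (A := A) x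
  have := sq_nonneg ‖V x‖
  linarith

lemma contDiff_mBV (hA : ContDiff ℝ 2 A) (hV : ContDiff ℝ 1 V) :
    ContDiff ℝ 1 (mBV A V) := by
  have hg : ContDiff ℝ 1 (fun x => 1 + normBsq A x + ‖V x‖ ^ 2) :=
    ((contDiff_const.add (contDiff_normBsq hA)).add (contDiff_normVsq hV))
  rw [contDiff_iff_contDiffAt]
  intro x
  have hne : 1 + normBsq A x + ‖V x‖ ^ 2 ≠ 0 := by
    have := normBsq_nonneg (A := A) x
    have := sq_nonneg ‖V x‖
    positivity
  exact (Real.contDiffAt_sqrt hne).comp x hg.contDiffAt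

lemma contDiff_Psi (hA : ContDiff ℝ 2 A) (hV : ContDiff ℝ 1 V) (j k : Fin d) :
    ContDiff ℝ 1 (fun y => Bmat A j k y / mBV A V y) :=
  (contDiff_B hA j k).div (contDiff_mBV hA hV) fun x => (mBV_pos x).ne'

lemma Bmat_sq_le (x : Fin d → ℝ) (j k : Fin d) :
    Bmat A j k x ^ 2 ≤ normBsq A x := by
  unfold normBsq
  calc Bmat A j k x ^ 2 ≤ ∑ k', Bmat A j k' x ^ 2 :=
        Finset.single_le_sum (f := fun k' => Bmat A j k' x ^ 2)
          (fun _ _ => sq_nonneg _) (Finset.mem_univ k)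
    _ ≤ ∑ j', ∑ k', Bmat A j' k' x ^ 2 :=
        Finset.single_le_sum (f := fun j' => ∑ k', Bmat A j' k' x ^ 2)
          (fun _ _ => Finset.sum_nonneg fun _ _ => sq_nonneg _) (Finset.mem_univ j)

lemma abs_Psi_le_one (x : Fin d → ℝ) (j k : Fin d) :
    |Bmat A j k x / mBV A V x| ≤ 1 := by
  rw [abs_div, div_le_one (lt_of_lt_of_le (mBV_pos x) (le_abs_self _))]
  have h1 : Bmat A j k x ^ 2 ≤ mBV A V x ^ 2 := by
    rw [sq_mBV]
    have := Bmat_sq_le (A := A) x j k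
    have := sq_nonneg ‖V x‖
    linarith
  calc |Bmat A j k x| = Real.sqrt (Bmat A j k x ^ 2) := (Real.sqrt_sq_eq_abs _).symm
    _ ≤ Real.sqrt (mBV A V x ^ 2) := Real.sqrt_le_sqrt h1
    _ = |mBV A V x| := Real.sqrt_sq_eq_abs _

lemma contDiff_uk (hu1 : ContDiff ℝ (⊤ : ℕ∞) u) (k : Fin d) :
    ContDiff ℝ 1 (fun y => fderiv ℝ u y (Pi.single k 1)) :=
  (hu1.fderiv_right (WithTop.coe_le_coe.mpr le_top)).clm_apply contDiff_const

lemma contDiff_magD (hA : ContDiff ℝ 2 A) (hu1 : ContDiff ℝ (⊤ : ℕ∞) u) (k : Fin d) :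
    ContDiff ℝ 1 (magD A k u) := by
  unfold magD
  exact (contDiff_const.mul (contDiff_uk hu1 k)).add
    ((Complex.ofRealCLM.contDiff.comp
      (((ContinuousLinearMap.proj (R := ℝ) (φ := fun _ : Fin d => ℝ) k).contDiff.comp
        hA).of_le one_le_two)).mul (hu1.of_le (by simp)))

lemma contDiff_G (hA : ContDiff ℝ 2 A) (hu1 : ContDiff ℝ (⊤ : ℕ∞) u) (k : Fin d) :
    ContDiff ℝ 1 (Gfun A u k) := by
  unfold Gfun
  have hconj : ContDiff ℝ 1 (fun y => (starRingEnd ℂ) (u y)) := by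
    have : ContDiff ℝ 1 (fun y => Complex.conjCLE (u y)) :=
      Complex.conjCLE.toContinuousLinearMap.contDiff.comp (hu1.of_le (by simp))
    simpa using this
  exact Complex.reCLM.contDiff.comp (hconj.mul (contDiff_magD hA hu1 k))

lemma pd_G_eq (hA : ContDiff ℝ 2 A) (hu1 : ContDiff ℝ (⊤ : ℕ∞) u) (j k : Fin d)
    (x : Fin d → ℝ) :
    pdR j (Gfun A u k) x =
      ((starRingEnd ℂ) (fderiv ℝ u x (Pi.single j 1)) * magD A k u x
        + (starRingEnd ℂ) (u x) *
          (-Complex.I * fderiv ℝ (fderiv ℝ u) x (Pi.single j 1) (Pi.single k 1)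
            + (pdR j (fun y => A y k) x : ℝ) * u x
            + (A x k : ℂ) * fderiv ℝ u x (Pi.single j 1))).re := by
  have hu' : ∀ y, HasFDerivAt u (fderiv ℝ u y) y := fun y =>
    (hu1.differentiable (by simp) y).hasFDerivAt
  have hDu : HasFDerivAt (fderiv ℝ u) (fderiv ℝ (fderiv ℝ u) x) x :=
    (((hu1.fderiv_right (m := 1) (WithTop.coe_le_coe.mpr le_top)).differentiable one_ne_zero) x).hasFDerivAt
  have huk : HasFDerivAt (fun y => fderiv ℝ u y (Pi.single k 1))
      ((fderiv ℝ (fderiv ℝ u) x).flip (Pi.single k 1)) x := by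
    have h := hDu.clm_apply (hasFDerivAt_const (Pi.single k (1:ℝ)) x)
    simpa using h
  have hAk : HasFDerivAt (fun y => A y k) (fderiv ℝ (fun y => A y k) x) x :=
    ((((ContinuousLinearMap.proj (R := ℝ) (φ := fun _ : Fin d => ℝ) k).contDiff.comp
        hA).differentiable two_ne_zero) x).hasFDerivAt
  have hAkC : HasFDerivAt (fun y => ((A y k : ℝ) : ℂ))
      (Complex.ofRealCLM.comp (fderiv ℝ (fun y => A y k) x)) x :=
    Complex.ofRealCLM.hasFDerivAt.comp x hAk
  have hmag : HasFDerivAt (magD A k u)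
      ((-Complex.I) • ((fderiv ℝ (fderiv ℝ u) x).flip (Pi.single k 1))
        + (((A x k : ℝ) : ℂ) • (fderiv ℝ u x).restrictScalars ℝ +
            (Complex.ofRealCLM.comp (fderiv ℝ (fun y => A y k) x)).smulRight (u x))) x := by
    unfold magD
    exact (huk.const_mul (-Complex.I)).add (hAkC.mul' (hu' x))
  have hconj : HasFDerivAt (fun y => (starRingEnd ℂ) (u y))
      ((Complex.conjCLE : ℂ ≃L[ℝ] ℂ).toContinuousLinearMap.comp (fderiv ℝ u x)) x := by
    have h := ((Complex.conjCLE : ℂ ≃L[ℝ] ℂ).toContinuousLinearMap.hasFDerivAt).comp x (hu' x)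
    exact h
  have hprod := hconj.mul' hmag
  have hG : HasFDerivAt (Gfun A u k) _ x := (Complex.reCLM.hasFDerivAt).comp x hprod
  rw [pdR, hG.fderiv]
  simp only [ContinuousLinearMap.comp_apply, ContinuousLinearMap.add_apply,
    ContinuousLinearMap.smul_apply, ContinuousLinearMap.flip_apply,
    ContinuousLinearMap.smulRight_apply, ContinuousLinearMap.coe_restrictScalars',
    ContinuousLinearEquiv.coe_coe, Complex.conjCLE_apply, Complex.reCLM_apply,
    Complex.ofRealCLM_apply, smul_eq_mul, op_smul_eq_mul, pdR]
  congr 1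
  ring

lemma key_pointwise (hA : ContDiff ℝ 2 A) (hu1 : ContDiff ℝ (⊤ : ℕ∞) u) (j k : Fin d)
    (x : Fin d → ℝ) :
    Bmat A j k x * ‖u x‖ ^ 2
      = pdR j (Gfun A u k) x - pdR k (Gfun A u j) x
        - 2 * ((starRingEnd ℂ) (magD A j u x) * magD A k u x).im := by
  have hsym : fderiv ℝ (fderiv ℝ u) x (Pi.single k 1) (Pi.single j 1)
      = fderiv ℝ (fderiv ℝ u) x (Pi.single j 1) (Pi.single k 1) :=
    (hu1.contDiffAt.isSymmSndFDerivAt (by simp; exact WithTop.coe_le_coe.mpr (le_top (a := (2 : ℕ∞))))) _ _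
  rw [pd_G_eq hA hu1 j k x, pd_G_eq hA hu1 k j x, hsym, Bmat]
  have hn : ‖u x‖ ^ 2 = (u x).re ^ 2 + (u x).im ^ 2 := by
    rw [Complex.sq_norm, Complex.normSq_apply]; ring
  rw [hn]
  unfold magD pdR
  simp only [Complex.mul_re, Complex.mul_im, Complex.add_re, Complex.add_im,
    Complex.sub_re, Complex.sub_im, Complex.neg_re, Complex.neg_im,
    Complex.conj_re, Complex.conj_im, Complex.I_re, Complex.I_im,
    Complex.ofReal_re, Complex.ofReal_im]
  ring

lemma fderiv_zero_on_open {E : Type*} [NormedAddCommGroup E] [NormedSpace ℝ E]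
    {f : (Fin d → ℝ) → E} {S : Set (Fin d → ℝ)} (hS : IsOpen S)
    (hf : ∀ y ∈ S, f y = 0) {x : Fin d → ℝ} (hx : x ∈ S) : fderiv ℝ f x = 0 := by
  have h : f =ᶠ[nhds x] (fun _ => 0) := Filter.eventuallyEq_of_mem (hS.mem_nhds hx) hf
  rw [h.fderiv_eq]
  exact fderiv_const_apply 0

lemma u_zero_outside {x : Fin d → ℝ} (hx : x ∉ tsupport u) : u x = 0 :=
  image_eq_zero_of_notMem_tsupport hx

lemma fderiv_u_zero_outside {x : Fin d → ℝ} (hx : x ∉ tsupport u) :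
    fderiv ℝ u x = 0 :=
  fderiv_zero_on_open (isClosed_tsupport u).isOpen_compl
    (fun y hy => image_eq_zero_of_notMem_tsupport hy) hx

lemma magD_zero_outside (k : Fin d) {x : Fin d → ℝ} (hx : x ∉ tsupport u) :
    magD A k u x = 0 := by
  rw [magD, u_zero_outside hx, fderiv_u_zero_outside hx]
  simp

lemma Gfun_zero_outside (k : Fin d) {x : Fin d → ℝ} (hx : x ∉ tsupport u) :
    Gfun A u k x = 0 := by
  rw [Gfun, u_zero_outside hx]
  simp

lemma Gfun_compactSupport (hus : HasCompactSupport u) (k : Fin d) :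
    HasCompactSupport (Gfun A u k) :=
  HasCompactSupport.intro hus fun _ hx => Gfun_zero_outside k hx

lemma fderiv_Gfun_zero_outside (k : Fin d) {x : Fin d → ℝ} (hx : x ∉ tsupport u) :
    fderiv ℝ (Gfun A u k) x = 0 :=
  fderiv_zero_on_open (isClosed_tsupport u).isOpen_compl
    (fun y hy => Gfun_zero_outside k hy) hx

lemma integrable_supp (hus : HasCompactSupport u) {f : (Fin d → ℝ) → ℝ}
    (hf : Continuous f) (h0 : ∀ x, x ∉ tsupport u → f x = 0) :
    Integrable f volume :=
  hf.integrable_of_hasCompactSupport (HasCompactSupport.intro hus h0)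

end Aux


section Main

variable {d : ℕ} {A : (Fin d → ℝ) → (Fin d → ℝ)} {V : (Fin d → ℝ) → ℂ}
  {u : (Fin d → ℝ) → ℂ}

lemma cont_pdPsi (hA : ContDiff ℝ 2 A) (hV : ContDiff ℝ 1 V) (j k l : Fin d) :
    Continuous fun x => fderiv ℝ (fun y => Bmat A j k y / mBV A V y) x (Pi.single l 1) :=
  ((contDiff_Psi hA hV j k).continuous_fderiv one_ne_zero).clm_apply continuous_const

lemma cont_pdG (hA : ContDiff ℝ 2 A) (hu1 : ContDiff ℝ (⊤ : ℕ∞) u) (k l : Fin d) :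
    Continuous fun x => fderiv ℝ (Gfun A u k) x (Pi.single l 1) :=
  ((contDiff_G hA hu1 k).continuous_fderiv one_ne_zero).clm_apply continuous_const

lemma cont_Im (hA : ContDiff ℝ 2 A) (hu1 : ContDiff ℝ (⊤ : ℕ∞) u) (j k : Fin d) :
    Continuous fun x => ((starRingEnd ℂ) (magD A j u x) * magD A k u x).im :=
  Complex.continuous_im.comp
    ((continuous_star.comp (contDiff_magD hA hu1 j).continuous).mul
      (contDiff_magD hA hu1 k).continuous)

lemma int_pdPsiG (hA : ContDiff ℝ 2 A) (hV : ContDiff ℝ 1 V) (hu1 : ContDiff ℝ (⊤ : ℕ∞) u)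
    (hus : HasCompactSupport u) (j k l m : Fin d) :
    Integrable (fun x => fderiv ℝ (fun y => Bmat A j k y / mBV A V y) x (Pi.single l 1)
      * Gfun A u m x) volume :=
  integrable_supp hus ((cont_pdPsi hA hV j k l).mul (contDiff_G hA hu1 m).continuous)
    (fun x hx => by rw [Gfun_zero_outside m hx, mul_zero])

lemma int_PsiIm (hA : ContDiff ℝ 2 A) (hV : ContDiff ℝ 1 V) (hu1 : ContDiff ℝ (⊤ : ℕ∞) u)
    (hus : HasCompactSupport u) (j k : Fin d) :
    Integrable (fun x => 2 * (Bmat A j k x / mBV A V x) *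
      ((starRingEnd ℂ) (magD A j u x) * magD A k u x).im) volume :=
  integrable_supp hus
    ((continuous_const.mul (contDiff_Psi hA hV j k).continuous).mul (cont_Im hA hu1 j k))
    (fun x hx => by rw [magD_zero_outside k hx]; simp)

lemma int_PsipdG (hA : ContDiff ℝ 2 A) (hV : ContDiff ℝ 1 V) (hu1 : ContDiff ℝ (⊤ : ℕ∞) u)
    (hus : HasCompactSupport u) (j k l m : Fin d) :
    Integrable (fun x => (Bmat A j k x / mBV A V x)
      * fderiv ℝ (Gfun A u m) x (Pi.single l 1)) volume :=
  integrable_supp hus ((contDiff_Psi hA hV j k).continuous.mul (cont_pdG hA hu1 m l))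
    (fun x hx => by rw [fderiv_Gfun_zero_outside m hx]; simp)

lemma int_RHS (hA : ContDiff ℝ 2 A) (hV : ContDiff ℝ 1 V) (hu1 : ContDiff ℝ (⊤ : ℕ∞) u)
    (hus : HasCompactSupport u) (j k : Fin d) :
    Integrable (fun x =>
      - fderiv ℝ (fun y => Bmat A j k y / mBV A V y) x (Pi.single j 1) * Gfun A u k x
      + fderiv ℝ (fun y => Bmat A j k y / mBV A V y) x (Pi.single k 1) * Gfun A u j x
      - 2 * (Bmat A j k x / mBV A V x) *
          ((starRingEnd ℂ) (magD A j u x) * magD A k u x).im) volume := by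
  have h1 := (int_pdPsiG hA hV hu1 hus j k j k).neg
  have h2 := int_pdPsiG hA hV hu1 hus j k k j
  have h3 := int_PsiIm hA hV hu1 hus j k
  simpa [neg_mul, Pi.add_def, Pi.sub_def, Pi.neg_def] using (h1.add h2).sub h3

lemma claim2 (hA : ContDiff ℝ 2 A) (hV : ContDiff ℝ 1 V) (hu1 : ContDiff ℝ (⊤ : ℕ∞) u)
    (hus : HasCompactSupport u) (j k : Fin d) :
    ∫ x, (Bmat A j k x / mBV A V x) * (Bmat A j k x * ‖u x‖ ^ 2)
      = ∫ x, (- fderiv ℝ (fun y => Bmat A j k y / mBV A V y) x (Pi.single j 1) * Gfun A u k x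
          + fderiv ℝ (fun y => Bmat A j k y / mBV A V y) x (Pi.single k 1) * Gfun A u j x
          - 2 * (Bmat A j k x / mBV A V x) *
              ((starRingEnd ℂ) (magD A j u x) * magD A k u x).im) := by
  have iA := int_PsipdG hA hV hu1 hus j k j k
  have iB := int_PsipdG hA hV hu1 hus j k k j
  have iC := int_PsiIm hA hV hu1 hus j k
  have i1 := int_pdPsiG hA hV hu1 hus j k j k
  have i2 := int_pdPsiG hA hV hu1 hus j k k j
  have hpt : ∀ x, (Bmat A j k x / mBV A V x) * (Bmat A j k x * ‖u x‖ ^ 2)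
      = (Bmat A j k x / mBV A V x) * fderiv ℝ (Gfun A u k) x (Pi.single j 1)
        - (Bmat A j k x / mBV A V x) * fderiv ℝ (Gfun A u j) x (Pi.single k 1)
        - 2 * (Bmat A j k x / mBV A V x) *
            ((starRingEnd ℂ) (magD A j u x) * magD A k u x).im := by
    intro x
    have h := key_pointwise hA hu1 j k x
    rw [pdR, pdR] at h
    rw [h]
    ring
  have iAB : Integrable (fun x => (Bmat A j k x / mBV A V x)
      * fderiv ℝ (Gfun A u k) x (Pi.single j 1)
      - (Bmat A j k x / mBV A V x) * fderiv ℝ (Gfun A u j) x (Pi.single k 1)) volume :=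
    iA.sub iB
  rw [integral_congr_ae (Filter.Eventually.of_forall hpt)]
  rw [integral_sub iAB iC, integral_sub iA iB]
  have e1 := integral_mul_pd (fun y => Bmat A j k y / mBV A V y) (Gfun A u k)
    (contDiff_Psi hA hV j k) (contDiff_G hA hu1 k) (Gfun_compactSupport hus k)
    (Pi.single j 1)
  have e2 := integral_mul_pd (fun y => Bmat A j k y / mBV A V y) (Gfun A u j)
    (contDiff_Psi hA hV j k) (contDiff_G hA hu1 j) (Gfun_compactSupport hus j)
    (Pi.single k 1)
  rw [e1, e2]
  have i12 : Integrable (fun x =>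
      - ((fderiv ℝ (fun y => Bmat A j k y / mBV A V y) x) (Pi.single j 1) * Gfun A u k x)
      + (fderiv ℝ (fun y => Bmat A j k y / mBV A V y) x) (Pi.single k 1) * Gfun A u j x) volume :=
    i1.neg.add i2
  have hre : ∀ x : Fin d → ℝ,
      (- fderiv ℝ (fun y => Bmat A j k y / mBV A V y) x (Pi.single j 1) * Gfun A u k x
        + fderiv ℝ (fun y => Bmat A j k y / mBV A V y) x (Pi.single k 1) * Gfun A u j x
        - 2 * (Bmat A j k x / mBV A V x) *
            ((starRingEnd ℂ) (magD A j u x) * magD A k u x).im)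
      = (- ((fderiv ℝ (fun y => Bmat A j k y / mBV A V y) x) (Pi.single j 1) * Gfun A u k x)
        + (fderiv ℝ (fun y => Bmat A j k y / mBV A V y) x) (Pi.single k 1) * Gfun A u j x)
        - 2 * (Bmat A j k x / mBV A V x) *
            ((starRingEnd ℂ) (magD A j u x) * magD A k u x).im := fun x => by ring
  rw [show (∫ x, (- fderiv ℝ (fun y => Bmat A j k y / mBV A V y) x (Pi.single j 1)
        * Gfun A u k x
      + fderiv ℝ (fun y => Bmat A j k y / mBV A V y) x (Pi.single k 1) * Gfun A u j x
      - 2 * (Bmat A j k x / mBV A V x) *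
          ((starRingEnd ℂ) (magD A j u x) * magD A k u x).im))
    = ∫ x, ((- ((fderiv ℝ (fun y => Bmat A j k y / mBV A V y) x) (Pi.single j 1)
          * Gfun A u k x)
        + (fderiv ℝ (fun y => Bmat A j k y / mBV A V y) x) (Pi.single k 1) * Gfun A u j x)
        - 2 * (Bmat A j k x / mBV A V x) *
            ((starRingEnd ℂ) (magD A j u x) * magD A k u x).im)
    from integral_congr_ae (Filter.Eventually.of_forall hre)]
  have i1n : Integrable (fun x =>
      - ((fderiv ℝ (fun y => Bmat A j k y / mBV A V y) x) (Pi.single j 1) * Gfun A u k x))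
      volume := i1.neg
  rw [integral_sub i12 iC, integral_add i1n i2, integral_neg]
  ring

lemma claim3 (hA : ContDiff ℝ 2 A) (hV : ContDiff ℝ 1 V) (hu1 : ContDiff ℝ (⊤ : ℕ∞) u)
    (x : Fin d → ℝ) :
    ∑ j, ∑ k, (- fderiv ℝ (fun y => Bmat A j k y / mBV A V y) x (Pi.single j 1)
          * Gfun A u k x
        + fderiv ℝ (fun y => Bmat A j k y / mBV A V y) x (Pi.single k 1) * Gfun A u j x
        - 2 * (Bmat A j k x / mBV A V x) *
            ((starRingEnd ℂ) (magD A j u x) * magD A k u x).im)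
      ≤ 3 * d * (∑ j, ‖magD A j u x‖ ^ 2) + gradPsiSq A V x * ‖u x‖ ^ 2 := by
  have hterm : ∀ j k : Fin d,
      (- fderiv ℝ (fun y => Bmat A j k y / mBV A V y) x (Pi.single j 1) * Gfun A u k x
        + fderiv ℝ (fun y => Bmat A j k y / mBV A V y) x (Pi.single k 1) * Gfun A u j x
        - 2 * (Bmat A j k x / mBV A V x) *
            ((starRingEnd ℂ) (magD A j u x) * magD A k u x).im)
      ≤ ‖fderiv ℝ (fun y => Bmat A j k y / mBV A V y) x‖ ^ 2 * ‖u x‖ ^ 2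
        + (3/2) * ‖magD A j u x‖ ^ 2 + (3/2) * ‖magD A k u x‖ ^ 2 := by
    intro j k
    set D := fderiv ℝ (fun y => Bmat A j k y / mBV A V y) x with hD
    set n := ‖D‖ with hn
    set c := ‖u x‖ with hc
    set pj := ‖magD A j u x‖ with hpj
    set pk := ‖magD A k u x‖ with hpk
    have hn0 : 0 ≤ n := norm_nonneg _
    have hc0 : 0 ≤ c := norm_nonneg _
    have hpj0 : 0 ≤ pj := norm_nonneg _
    have hpk0 : 0 ≤ pk := norm_nonneg _
    have hj : |D (Pi.single j 1)| ≤ n := by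
      have h := D.le_opNorm (Pi.single j 1)
      rw [Pi.norm_single, norm_one, mul_one] at h
      exact h
    have hk : |D (Pi.single k 1)| ≤ n := by
      have h := D.le_opNorm (Pi.single k 1)
      rw [Pi.norm_single, norm_one, mul_one] at h
      exact h
    have hGk : |Gfun A u k x| ≤ c * pk := by
      calc |Gfun A u k x| ≤ ‖(starRingEnd ℂ) (u x) * magD A k u x‖ :=
            Complex.abs_re_le_norm _
        _ = c * pk := by rw [norm_mul, RCLike.norm_conj]
    have hGj : |Gfun A u j x| ≤ c * pj := by
      calc |Gfun A u j x| ≤ ‖(starRingEnd ℂ) (u x) * magD A j u x‖ :=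
            Complex.abs_re_le_norm _
        _ = c * pj := by rw [norm_mul, RCLike.norm_conj]
    have hIm : |((starRingEnd ℂ) (magD A j u x) * magD A k u x).im| ≤ pj * pk := by
      calc |((starRingEnd ℂ) (magD A j u x) * magD A k u x).im|
          ≤ ‖(starRingEnd ℂ) (magD A j u x) * magD A k u x‖ := Complex.abs_im_le_norm _
        _ = pj * pk := by rw [norm_mul, RCLike.norm_conj]
    have hPsi : |Bmat A j k x / mBV A V x| ≤ 1 := abs_Psi_le_one x j k
    have t1 : - D (Pi.single j 1) * Gfun A u k x ≤ n * (c * pk) := by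
      calc - D (Pi.single j 1) * Gfun A u k x ≤ |D (Pi.single j 1) * Gfun A u k x| := by
            rw [abs_mul]
            nlinarith [abs_nonneg (D (Pi.single j 1)), abs_nonneg (Gfun A u k x),
              neg_abs_le (D (Pi.single j 1)), le_abs_self (Gfun A u k x),
              neg_abs_le (Gfun A u k x), le_abs_self (D (Pi.single j 1))]
        _ ≤ n * (c * pk) := by
            rw [abs_mul]
            exact mul_le_mul hj hGk (abs_nonneg _) hn0
    have t2 : D (Pi.single k 1) * Gfun A u j x ≤ n * (c * pj) := by
      calc D (Pi.single k 1) * Gfun A u j x ≤ |D (Pi.single k 1) * Gfun A u j x| :=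
            le_abs_self _
        _ ≤ n * (c * pj) := by
            rw [abs_mul]
            exact mul_le_mul hk hGj (abs_nonneg _) hn0
    have t3 : - (2 * (Bmat A j k x / mBV A V x) *
        ((starRingEnd ℂ) (magD A j u x) * magD A k u x).im) ≤ 2 * (pj * pk) := by
      calc - (2 * (Bmat A j k x / mBV A V x) *
            ((starRingEnd ℂ) (magD A j u x) * magD A k u x).im)
          ≤ |2 * (Bmat A j k x / mBV A V x) *
            ((starRingEnd ℂ) (magD A j u x) * magD A k u x).im| := neg_le_abs _
        _ = 2 * (|Bmat A j k x / mBV A V x| *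
            |((starRingEnd ℂ) (magD A j u x) * magD A k u x).im|) := by
            rw [abs_mul, abs_mul]
            simp [abs_of_nonneg, mul_assoc]
        _ ≤ 2 * (1 * (pj * pk)) :=  by
            apply mul_le_mul_of_nonneg_left _ (by norm_num : (0:ℝ) ≤ 2)
            exact mul_le_mul hPsi hIm (abs_nonneg _) zero_le_one
        _ = 2 * (pj * pk) := by ring
    nlinarith [sq_nonneg (n * c - pk), sq_nonneg (n * c - pj), sq_nonneg (pj - pk),
      mul_nonneg (mul_nonneg hn0 hc0) hpk0, mul_nonneg (mul_nonneg hn0 hc0) hpj0]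
  calc ∑ j, ∑ k, (- fderiv ℝ (fun y => Bmat A j k y / mBV A V y) x (Pi.single j 1)
          * Gfun A u k x
        + fderiv ℝ (fun y => Bmat A j k y / mBV A V y) x (Pi.single k 1) * Gfun A u j x
        - 2 * (Bmat A j k x / mBV A V x) *
            ((starRingEnd ℂ) (magD A j u x) * magD A k u x).im)
      ≤ ∑ j, ∑ k, (‖fderiv ℝ (fun y => Bmat A j k y / mBV A V y) x‖ ^ 2 * ‖u x‖ ^ 2
          + (3/2) * ‖magD A j u x‖ ^ 2 + (3/2) * ‖magD A k u x‖ ^ 2) :=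
        Finset.sum_le_sum fun j _ => Finset.sum_le_sum fun k _ => hterm j k
    _ = 3 * d * (∑ j, ‖magD A j u x‖ ^ 2) + gradPsiSq A V x * ‖u x‖ ^ 2 := by
        rw [gradPsiSq]
        simp only [Finset.sum_add_distrib, Finset.sum_const, Finset.card_univ,
          Fintype.card_fin, nsmul_eq_mul, ← Finset.sum_mul, ← Finset.mul_sum]
        ring

end Main

/-- Lemma 3.3 (lem-BmBV):
`∫_Ω (|B|²/m_{B,V}) |u|² ≤ 3d ‖(-i∇+A)u‖² + ‖|∇Ψ| u‖²`. -/
theorem stmt1 (d : ℕ) (Ω : Set (Fin d → ℝ)) (hΩ : IsOpen Ω)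
    (A : (Fin d → ℝ) → (Fin d → ℝ)) (hA : ContDiff ℝ 2 A)
    (V : (Fin d → ℝ) → ℂ) (hV : ContDiff ℝ 1 V)
    (u : (Fin d → ℝ) → ℂ) (hu : IsTest Ω u) :
    (∫ x in Ω, (normBsq A x / mBV A V x) * ‖u x‖ ^ 2)
      ≤ 3 * d * (∫ x in Ω, ∑ j, ‖magD A j u x‖ ^ 2)
        + ∫ x in Ω, gradPsiSq A V x * ‖u x‖ ^ 2 := by
  obtain ⟨hu1, hus, hsub⟩ := hu
  have hnotin : ∀ x, x ∉ Ω → x ∉ tsupport u := fun x hx h => hx (hsub h)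
  have conv1 : (∫ x in Ω, (normBsq A x / mBV A V x) * ‖u x‖ ^ 2)
      = ∫ x, (normBsq A x / mBV A V x) * ‖u x‖ ^ 2 :=
    setIntegral_eq_integral_of_forall_compl_eq_zero fun x hx => by
      rw [u_zero_outside (hnotin x hx)]; simp
  have conv2 : (∫ x in Ω, ∑ j, ‖magD A j u x‖ ^ 2) = ∫ x, ∑ j, ‖magD A j u x‖ ^ 2 :=
    setIntegral_eq_integral_of_forall_compl_eq_zero fun x hx =>
      Finset.sum_eq_zero fun j _ => by rw [magD_zero_outside j (hnotin x hx)]; simp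
  have conv3 : (∫ x in Ω, gradPsiSq A V x * ‖u x‖ ^ 2)
      = ∫ x, gradPsiSq A V x * ‖u x‖ ^ 2 :=
    setIntegral_eq_integral_of_forall_compl_eq_zero fun x hx => by
      rw [u_zero_outside (hnotin x hx)]; simp
  rw [conv1, conv2, conv3]
  have contu2 : Continuous fun x => ‖u x‖ ^ 2 := (hu1.continuous.norm).pow 2
  have iPsiB : ∀ j k : Fin d, Integrable (fun x =>
      (Bmat A j k x / mBV A V x) * (Bmat A j k x * ‖u x‖ ^ 2)) volume := fun j k =>
    integrable_supp hus ((contDiff_Psi hA hV j k).continuous.mul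
      ((contDiff_B hA j k).continuous.mul contu2))
      (fun x hx => by rw [u_zero_outside hx]; simp)
  have iRHS : ∀ j k : Fin d, Integrable (fun x => (- fderiv ℝ (fun y => Bmat A j k y / mBV A V y) x (Pi.single j 1) * Gfun A u k x
          + fderiv ℝ (fun y => Bmat A j k y / mBV A V y) x (Pi.single k 1) * Gfun A u j x
          - 2 * (Bmat A j k x / mBV A V x) *
              ((starRingEnd ℂ) (magD A j u x) * magD A k u x).im)) volume :=
    fun j k => int_RHS hA hV hu1 hus j k
  have iRHSsum : Integrable (fun x => ∑ j, ∑ k, (- fderiv ℝ (fun y => Bmat A j k y / mBV A V y) x (Pi.single j 1) * Gfun A u k x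
          + fderiv ℝ (fun y => Bmat A j k y / mBV A V y) x (Pi.single k 1) * Gfun A u j x
          - 2 * (Bmat A j k x / mBV A V x) *
              ((starRingEnd ℂ) (magD A j u x) * magD A k u x).im)) volume :=
    integrable_finset_sum _ fun j _ => integrable_finset_sum _ fun k _ => iRHS j k
  have iMag : Integrable (fun x => ∑ j, ‖magD A j u x‖ ^ 2) volume :=
    integrable_supp hus
      (continuous_finset_sum _ fun j _ => ((contDiff_magD hA hu1 j).continuous.norm).pow 2)
      (fun x hx => Finset.sum_eq_zero fun j _ => by rw [magD_zero_outside j hx]; simp)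
  have cont_grad : Continuous (gradPsiSq A V) := by
    unfold gradPsiSq
    exact continuous_finset_sum _ fun j _ => continuous_finset_sum _ fun k _ =>
      (((contDiff_Psi hA hV j k).continuous_fderiv one_ne_zero).norm).pow 2
  have igrad : Integrable (fun x => gradPsiSq A V x * ‖u x‖ ^ 2) volume :=
    integrable_supp hus (cont_grad.mul contu2)
      (fun x hx => by rw [u_zero_outside hx]; simp)
  have step1 : ∫ x, (normBsq A x / mBV A V x) * ‖u x‖ ^ 2
      = ∑ j, ∑ k, ∫ x, (Bmat A j k x / mBV A V x) * (Bmat A j k x * ‖u x‖ ^ 2) := by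
    have hpt : ∀ x, (normBsq A x / mBV A V x) * ‖u x‖ ^ 2
        = ∑ j, ∑ k, (Bmat A j k x / mBV A V x) * (Bmat A j k x * ‖u x‖ ^ 2) := by
      intro x
      rw [normBsq, Finset.sum_div, Finset.sum_mul]
      refine Finset.sum_congr rfl fun j _ => ?_
      rw [Finset.sum_div, Finset.sum_mul]
      refine Finset.sum_congr rfl fun k _ => ?_
      ring
    rw [integral_congr_ae (Filter.Eventually.of_forall hpt)]
    rw [integral_finset_sum _ fun j _ => integrable_finset_sum _ fun k _ => iPsiB j k]
    exact Finset.sum_congr rfl fun j _ => integral_finset_sum _ fun k _ => iPsiB j k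
  have step3 : ∫ x, ∑ j, ∑ k, (- fderiv ℝ (fun y => Bmat A j k y / mBV A V y) x (Pi.single j 1) * Gfun A u k x
          + fderiv ℝ (fun y => Bmat A j k y / mBV A V y) x (Pi.single k 1) * Gfun A u j x
          - 2 * (Bmat A j k x / mBV A V x) *
              ((starRingEnd ℂ) (magD A j u x) * magD A k u x).im)
      = ∑ j, ∑ k, ∫ x, (- fderiv ℝ (fun y => Bmat A j k y / mBV A V y) x (Pi.single j 1) * Gfun A u k x
          + fderiv ℝ (fun y => Bmat A j k y / mBV A V y) x (Pi.single k 1) * Gfun A u j x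
          - 2 * (Bmat A j k x / mBV A V x) *
              ((starRingEnd ℂ) (magD A j u x) * magD A k u x).im) := by
    rw [integral_finset_sum _ fun j _ => integrable_finset_sum _ fun k _ => iRHS j k]
    exact Finset.sum_congr rfl fun j _ => integral_finset_sum _ fun k _ => iRHS j k
  have final : ∫ x, (3 * (d:ℝ) * (∑ j, ‖magD A j u x‖ ^ 2) + gradPsiSq A V x * ‖u x‖ ^ 2)
      = 3 * (d:ℝ) * (∫ x, ∑ j, ‖magD A j u x‖ ^ 2)
        + ∫ x, gradPsiSq A V x * ‖u x‖ ^ 2 := by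
    rw [integral_add (iMag.const_mul (3 * (d:ℝ))) igrad, integral_const_mul]
  calc ∫ x, (normBsq A x / mBV A V x) * ‖u x‖ ^ 2
      = ∑ j, ∑ k, ∫ x, (Bmat A j k x / mBV A V x) * (Bmat A j k x * ‖u x‖ ^ 2) := step1
    _ = ∑ j, ∑ k, ∫ x, (- fderiv ℝ (fun y => Bmat A j k y / mBV A V y) x (Pi.single j 1) * Gfun A u k x
          + fderiv ℝ (fun y => Bmat A j k y / mBV A V y) x (Pi.single k 1) * Gfun A u j x
          - 2 * (Bmat A j k x / mBV A V x) *
              ((starRingEnd ℂ) (magD A j u x) * magD A k u x).im) :=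
        Finset.sum_congr rfl fun j _ => Finset.sum_congr rfl fun k _ =>
          claim2 hA hV hu1 hus j k
    _ = ∫ x, ∑ j, ∑ k, (- fderiv ℝ (fun y => Bmat A j k y / mBV A V y) x (Pi.single j 1) * Gfun A u k x
          + fderiv ℝ (fun y => Bmat A j k y / mBV A V y) x (Pi.single k 1) * Gfun A u j x
          - 2 * (Bmat A j k x / mBV A V x) *
              ((starRingEnd ℂ) (magD A j u x) * magD A k u x).im) := step3.symm
    _ ≤ ∫ x, (3 * (d:ℝ) * (∑ j, ‖magD A j u x‖ ^ 2) + gradPsiSq A V x * ‖u x‖ ^ 2) :=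
        integral_mono iRHSsum ((iMag.const_mul (3 * (d:ℝ))).add igrad)
          (fun x => claim3 hA hV hu1 x)
    _ = 3 * (d:ℝ) * (∫ x, ∑ j, ‖magD A j u x‖ ^ 2)
        + ∫ x, gradPsiSq A V x * ‖u x‖ ^ 2 := final
end
end

section
/- Let 𝒱 be a Hilbert space and Q a continuous sesquilinear form on 𝒱 × 𝒱. Assume there exist bounded operators Φ₁, Φ₂ ∈ ℒ(𝒱) and α > 0 such that for all u ∈ 𝒱: |Q(u,u)| + |Q(Φ₁u, u)| ≥ α‖u‖²_𝒱 and |Q(u,u)| + |Q(u, Φ₂u)| ≥ α‖u‖²_𝒱. Then the bounded operator 𝒜 : 𝒱 → 𝒱 defined by Q(u,v) = ⟨𝒜u, v⟩_𝒱 for all u,v ∈ 𝒱 is a continuous isomorphism of 𝒱 onto 𝒱 with bounded inverse. -/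
/-!
Writing `Q u v = ⟪v, 𝒜 u⟫`, the second inequality and Cauchy–Schwarz give
`α ‖u‖² ≤ (1 + ‖Φ₂‖) ‖u‖ ‖𝒜 u‖`, so `𝒜` is bounded below: it is injective with closed range.
If `v` is orthogonal to the range of `𝒜`, then `Q u v = 0` for every `u`, and the first
inequality at `u = v` forces `v = 0`; hence the range is also dense, and `𝒜` is onto.
-/

open scoped InnerProductSpace

namespace ContinuousLinearMap

variable {𝕜 E : Type*} [RCLike 𝕜] [NormedAddCommGroup E] [InnerProductSpace 𝕜 E]
  {A Φ : E →L[𝕜] E} {α : ℝ}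

theorem norm_le_of_le_norm_inner_add_norm_inner (hα : 0 < α)
    (h : ∀ u, α * ‖u‖ ^ 2 ≤ ‖⟪u, A u⟫_𝕜‖ + ‖⟪Φ u, A u⟫_𝕜‖) (u : E) :
    ‖u‖ ≤ (1 + ‖Φ‖) / α * ‖A u‖ := by
  rcases (norm_nonneg u).eq_or_lt with hu | hu
  · rw [← hu]; positivity
  have hΦu : ‖Φ u‖ ≤ ‖Φ‖ * ‖u‖ := Φ.le_opNorm u
  have key : α * ‖u‖ * ‖u‖ ≤ (1 + ‖Φ‖) * ‖A u‖ * ‖u‖ :=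
    calc α * ‖u‖ * ‖u‖ = α * ‖u‖ ^ 2 := by ring
      _ ≤ ‖⟪u, A u⟫_𝕜‖ + ‖⟪Φ u, A u⟫_𝕜‖ := h u
      _ ≤ ‖u‖ * ‖A u‖ + ‖Φ u‖ * ‖A u‖ :=
        add_le_add (norm_inner_le_norm _ _) (norm_inner_le_norm _ _)
      _ ≤ ‖u‖ * ‖A u‖ + ‖Φ‖ * ‖u‖ * ‖A u‖ := by gcongr
      _ = (1 + ‖Φ‖) * ‖A u‖ * ‖u‖ := by ring
  rw [div_mul_eq_mul_div, le_div_iff₀ hα, mul_comm]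
  exact le_of_mul_le_mul_right key hu

theorem orthogonal_range_eq_bot_of_le_norm_inner_add_norm_inner (hα : 0 < α)
    (h : ∀ v, α * ‖v‖ ^ 2 ≤ ‖⟪v, A v⟫_𝕜‖ + ‖⟪v, A (Φ v)⟫_𝕜‖) :
    A.rangeᗮ = ⊥ := by
  rw [Submodule.eq_bot_iff]
  intro v hv
  have hA : ∀ u, ⟪v, A u⟫_𝕜 = 0 := fun u =>
    Submodule.inner_left_of_mem_orthogonal (K := A.range) ⟨u, rfl⟩ hv
  have hv₀ : α * ‖v‖ ^ 2 ≤ 0 := by simpa only [hA, norm_zero, add_zero] using h v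
  have : ‖v‖ ^ 2 ≤ 0 := nonpos_of_mul_nonpos_right hv₀ hα
  simpa using this

theorem bijective_of_le_norm_inner_add_norm_inner [CompleteSpace E] {Φ₁ Φ₂ : E →L[𝕜] E}
    (hα : 0 < α)
    (h₁ : ∀ v, α * ‖v‖ ^ 2 ≤ ‖⟪v, A v⟫_𝕜‖ + ‖⟪v, A (Φ₁ v)⟫_𝕜‖)
    (h₂ : ∀ u, α * ‖u‖ ^ 2 ≤ ‖⟪u, A u⟫_𝕜‖ + ‖⟪Φ₂ u, A u⟫_𝕜‖) :
    Function.Bijective A := by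
  rw [bijective_iff_dense_range_and_antilipschitz, Submodule.topologicalClosure_eq_top_iff]
  refine ⟨orthogonal_range_eq_bot_of_le_norm_inner_add_norm_inner hα h₁, _,
    A.antilipschitz_of_bound (K := ((1 + ‖Φ₂‖) / α).toNNReal) fun u => ?_⟩
  refine (norm_le_of_le_norm_inner_add_norm_inner hα h₂ u).trans ?_
  gcongr
  exact Real.le_coe_toNNReal _

end ContinuousLinearMap

/-- Generalised Lax–Milgram theorem of Almog–Helffer (Theorem 2.1 in
[AlmogHe15]).  Here `Q` is a continuous sesquilinear form (linear in the first
variable, conjugate-linear in the second), and `𝒜` is the bounded operator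
with `Q(u,v) = ⟨𝒜u, v⟩` (i.e. `⟪v, 𝒜u⟫` in Mathlib's convention). -/
theorem stmt8 {𝒱 : Type*} [NormedAddCommGroup 𝒱] [InnerProductSpace ℂ 𝒱]
    [CompleteSpace 𝒱]
    (Q : 𝒱 →L[ℂ] (𝒱 →SL[starRingEnd ℂ] ℂ))
    (Φ₁ Φ₂ : 𝒱 →L[ℂ] 𝒱) (α : ℝ) (hα : 0 < α)
    (h1 : ∀ u : 𝒱, ‖Q u u‖ + ‖Q (Φ₁ u) u‖ ≥ α * ‖u‖ ^ 2)
    (h2 : ∀ u : 𝒱, ‖Q u u‖ + ‖Q u (Φ₂ u)‖ ≥ α * ‖u‖ ^ 2)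
    (𝒜 : 𝒱 →L[ℂ] 𝒱)
    (h𝒜 : ∀ u v : 𝒱, Q u v = ⟪v, 𝒜 u⟫_ℂ) :
    ∃ e : 𝒱 ≃L[ℂ] 𝒱, (e : 𝒱 → 𝒱) = 𝒜 := by
  have hbij : Function.Bijective 𝒜 :=
    𝒜.bijective_of_le_norm_inner_add_norm_inner hα
      (fun v => by simpa only [h𝒜] using h1 v) (fun u => by simpa only [h𝒜] using h2 u)
  exact ⟨.ofBijective 𝒜 (LinearMap.ker_eq_bot.2 hbij.1) (LinearMap.range_eq_top.2 hbij.2), rfl⟩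
end

section
/- Let 𝒱 be a Hilbert space continuously and densely embedded in a Hilbert space H, Q a continuous sesquilinear form on 𝒱 satisfying the weighted coercivity hypotheses: there exist Φ₁, Φ₂ ∈ ℒ(𝒱) extending to bounded operators on H and α > 0 with |Q(u,u)| + |Q(Φ₁u,u)| ≥ α‖u‖²_𝒱 and |Q(u,u)| + |Q(u,Φ₂u)| ≥ α‖u‖²_𝒱 for all u ∈ 𝒱. Define the operator L on H by Dom(L) = { u ∈ 𝒱 : v ↦ Q(u,v) is continuous on 𝒱 for the H-norm } and Q(u,v) = ⟨Lu, v⟩_H. Then: (i) L is bijective from Dom(L) onto H; (ii) Dom(L) is dense in 𝒱 and in H; (iii) L is closed. -/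
/-!
Riesz representation turns `Q` into a bounded operator `A` on `𝒱` with `Q u v = ⟪v, A u⟫`.
The second coercivity estimate gives `α ‖u‖ ≤ (1 + ‖Φ₂‖) ‖A u‖`, so `A` is injective with closed
range, and the first one shows that a vector orthogonal to the range of `A` vanishes; hence `A` is
an isomorphism. The equation `Q u = ⟪ι ·, f⟫` reads `A u = ι† f`, so `L⁻¹ = ι ∘ A⁻¹ ∘ ι†` is
bounded, which gives (i) and (iii), and `Dom L = A⁻¹ (range ι†)` is dense in `𝒱` because `ι†`
has dense range, `ι` being injective.
-/

open ContinuousLinearMap InnerProductSpace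

section SesqFormOperator

variable {𝕜 E : Type*} [RCLike 𝕜] [NormedAddCommGroup E] [InnerProductSpace 𝕜 E] [CompleteSpace E]

noncomputable def sesqFormOperator (Q : E →L[𝕜] E →L⋆[𝕜] 𝕜) : E →L[𝕜] E :=
  (continuousLinearMapOfBilin Q.flip).adjoint

theorem inner_sesqFormOperator (Q : E →L[𝕜] E →L⋆[𝕜] 𝕜) (u v : E) :
    ⟪v, sesqFormOperator Q u⟫_𝕜 = Q u v := by
  rw [sesqFormOperator, adjoint_inner_right, continuousLinearMapOfBilin_apply, flip_apply]

variable {Q : E →L[𝕜] E →L⋆[𝕜] 𝕜} {Φ Φ₁ Φ₂ : E →L[𝕜] E} {α : ℝ}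

theorem mul_norm_le_norm_sesqFormOperator
    (h : ∀ u : E, ‖Q u u‖ + ‖Q u (Φ u)‖ ≥ α * ‖u‖ ^ 2) (u : E) :
    α * ‖u‖ ≤ (1 + ‖Φ‖) * ‖sesqFormOperator Q u‖ := by
  set A := sesqFormOperator Q
  have hQ : ‖Q u u‖ + ‖Q u (Φ u)‖ ≤ (1 + ‖Φ‖) * ‖A u‖ * ‖u‖ := by
    rw [← inner_sesqFormOperator, ← inner_sesqFormOperator]
    calc ‖⟪u, A u⟫_𝕜‖ + ‖⟪Φ u, A u⟫_𝕜‖ ≤ ‖u‖ * ‖A u‖ + ‖Φ u‖ * ‖A u‖ :=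
          add_le_add (norm_inner_le_norm _ _) (norm_inner_le_norm _ _)
      _ ≤ ‖u‖ * ‖A u‖ + ‖Φ‖ * ‖u‖ * ‖A u‖ := by gcongr; exact Φ.le_opNorm u
      _ = (1 + ‖Φ‖) * ‖A u‖ * ‖u‖ := by ring
  rcases (norm_nonneg u).eq_or_lt with hu | hu
  · rw [← hu, mul_zero]; positivity
  · exact le_of_mul_le_mul_right (by nlinarith [h u]) hu

theorem antilipschitz_sesqFormOperator (hα : 0 < α)
    (h : ∀ u : E, ‖Q u u‖ + ‖Q u (Φ u)‖ ≥ α * ‖u‖ ^ 2) :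
    AntilipschitzWith ((1 + ‖Φ‖) / α).toNNReal (sesqFormOperator Q) :=
  (sesqFormOperator Q).antilipschitz_of_bound fun u => by
    rw [Real.coe_toNNReal _ (by positivity), div_mul_eq_mul_div, le_div_iff₀ hα, mul_comm]
    exact mul_norm_le_norm_sesqFormOperator h u

theorem ker_sesqFormOperator_eq_bot (hα : 0 < α)
    (h : ∀ u : E, ‖Q u u‖ + ‖Q u (Φ u)‖ ≥ α * ‖u‖ ^ 2) :
    (sesqFormOperator Q).ker = ⊥ :=
  LinearMap.ker_eq_bot.mpr (antilipschitz_sesqFormOperator hα h).injective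

theorem range_sesqFormOperator_eq_top (hα : 0 < α)
    (h₁ : ∀ u : E, ‖Q u u‖ + ‖Q (Φ₁ u) u‖ ≥ α * ‖u‖ ^ 2)
    (h₂ : ∀ u : E, ‖Q u u‖ + ‖Q u (Φ₂ u)‖ ≥ α * ‖u‖ ^ 2) :
    (sesqFormOperator Q).range = ⊤ := by
  have hclosed : IsClosed ((sesqFormOperator Q).range : Set E) :=
    (antilipschitz_sesqFormOperator hα h₂).isClosed_range (sesqFormOperator Q).uniformContinuous
  rw [← hclosed.submodule_topologicalClosure_eq, Submodule.topologicalClosure_eq_top_iff,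
    Submodule.eq_bot_iff]
  intro w hw
  have hQ : ∀ u, Q u w = 0 := fun u => by
    rw [← inner_sesqFormOperator, inner_eq_zero_symm]
    exact hw _ (LinearMap.mem_range_self _ u)
  have hw₀ := h₁ w
  rw [hQ, hQ, norm_zero, add_zero] at hw₀
  exact norm_eq_zero.mp (pow_eq_zero_iff two_ne_zero |>.mp (by nlinarith [sq_nonneg ‖w‖]))

end SesqFormOperator

section Adjoint

variable {𝕜 E F : Type*} [RCLike 𝕜] [NormedAddCommGroup E] [InnerProductSpace 𝕜 E]
  [CompleteSpace E] [NormedAddCommGroup F] [InnerProductSpace 𝕜 F] [CompleteSpace F]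

theorem ContinuousLinearMap.denseRange_adjoint_of_injective {T : E →L[𝕜] F}
    (hT : Function.Injective T) : DenseRange T.adjoint := by
  have h := T.orthogonal_ker
  rw [LinearMap.ker_eq_bot.mpr hT, Submodule.bot_orthogonal_eq_top] at h
  exact Submodule.dense_iff_topologicalClosure_eq_top.mpr h.symm

theorem sesqFormOperator_eq_adjoint_iff (Q : E →L[𝕜] E →L⋆[𝕜] 𝕜) (ι : E →L[𝕜] F)
    (u : E) (f : F) :
    sesqFormOperator Q u = ι.adjoint f ↔ ∀ v, Q u v = ⟪ι v, f⟫_𝕜 := by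
  constructor
  · intro h v
    rw [← inner_sesqFormOperator, h, adjoint_inner_right]
  · exact fun h => ext_inner_left 𝕜 fun v => by rw [inner_sesqFormOperator, h, adjoint_inner_right]

end Adjoint

theorem stmt9_general {𝒱 H : Type*} [NormedAddCommGroup 𝒱] [InnerProductSpace ℂ 𝒱]
    [CompleteSpace 𝒱] [NormedAddCommGroup H] [InnerProductSpace ℂ H]
    [CompleteSpace H]
    (ι : 𝒱 →L[ℂ] H) (hι : Function.Injective ι) (hdense : DenseRange ι)
    (Q : 𝒱 →L[ℂ] (𝒱 →SL[starRingEnd ℂ] ℂ))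
    (Φ₁ Φ₂ : 𝒱 →L[ℂ] 𝒱) (α : ℝ) (hα : 0 < α)
    (h1 : ∀ u : 𝒱, ‖Q u u‖ + ‖Q (Φ₁ u) u‖ ≥ α * ‖u‖ ^ 2)
    (h2 : ∀ u : 𝒱, ‖Q u u‖ + ‖Q u (Φ₂ u)‖ ≥ α * ‖u‖ ^ 2) :
    -- (i) `L : Dom(L) → H` is bijective:
    (∀ f : H, ∃! u : 𝒱, ∀ v : 𝒱, Q u v = ⟪ι v, f⟫_ℂ) ∧
    -- (ii) `Dom(L)` is dense in `𝒱` and in `H`: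
    Dense {u : 𝒱 | ∃ f : H, ∀ v : 𝒱, Q u v = ⟪ι v, f⟫_ℂ} ∧
    Dense {h : H | ∃ u : 𝒱, ι u = h ∧ ∃ f : H, ∀ v : 𝒱, Q u v = ⟪ι v, f⟫_ℂ} ∧
    -- (iii) `L` is closed (its graph is closed in `H × H`):
    IsClosed {p : H × H | ∃ u : 𝒱, ι u = p.1 ∧ ∀ v : 𝒱, Q u v = ⟪ι v, p.2⟫_ℂ} := by
  let A := ContinuousLinearEquiv.ofBijective (sesqFormOperator Q)
    (ker_sesqFormOperator_eq_bot hα h2) (range_sesqFormOperator_eq_top hα h1 h2)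
  let R : H →L[ℂ] 𝒱 := A.symm.toContinuousLinearMap ∘L ι.adjoint
  have hR : ∀ u f, (∀ v, Q u v = ⟪ι v, f⟫_ℂ) ↔ u = R f := fun u f =>
    (sesqFormOperator_eq_adjoint_iff Q ι u f).symm.trans A.eq_symm_apply.symm
  have hdom : {u : 𝒱 | ∃ f : H, ∀ v : 𝒱, Q u v = ⟪ι v, f⟫_ℂ} = Set.range R :=
    Set.ext fun u => exists_congr fun f => (hR u f).trans eq_comm
  have hdom_dense : Dense {u : 𝒱 | ∃ f : H, ∀ v : 𝒱, Q u v = ⟪ι v, f⟫_ℂ} := hdom ▸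
    A.symm.surjective.denseRange.comp (denseRange_adjoint_of_injective hι) A.symm.continuous
  refine ⟨fun f => ⟨R f, (hR _ f).2 rfl, fun u hu => (hR u f).1 hu⟩, hdom_dense, ?_, ?_⟩
  · have himage : {h : H | ∃ u : 𝒱, ι u = h ∧ ∃ f : H, ∀ v : 𝒱, Q u v = ⟪ι v, f⟫_ℂ}
        = ι '' {u : 𝒱 | ∃ f : H, ∀ v : 𝒱, Q u v = ⟪ι v, f⟫_ℂ} :=
      Set.ext fun h => ⟨fun ⟨u, hu, hf⟩ => ⟨u, hf, hu⟩, fun ⟨u, hf, hu⟩ => ⟨u, hu, hf⟩⟩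
    exact himage ▸ hdense.dense_image ι.continuous hdom_dense
  · have hgraph : {p : H × H | ∃ u : 𝒱, ι u = p.1 ∧ ∀ v : 𝒱, Q u v = ⟪ι v, p.2⟫_ℂ}
        = {p | p.1 = ι (R p.2)} :=
      Set.ext fun p => ⟨fun ⟨u, hu, hQ⟩ => hu.symm.trans (congrArg ι ((hR u p.2).1 hQ)),
        fun hp => ⟨R p.2, hp.symm, (hR _ _).2 rfl⟩⟩
    exact hgraph ▸ isClosed_eq continuous_fst (by fun_prop)

/-- Abstract representation theorem of Almog–Helffer (Theorem 2.2 in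
[AlmogHe15]).  `𝒱` is continuously and densely embedded in `H` via `ι`;
`Q` is a continuous sesquilinear form on `𝒱` (linear in the first variable,
conjugate-linear in the second) satisfying the weighted coercivity hypotheses,
with weights `Φ₁, Φ₂` extending to bounded operators on `H`.
The operator `L` has domain `D = {u ∈ 𝒱 : v ↦ Q(u,v) is H-continuous}`
and is characterised by `Q(u,v) = ⟨Lu, v⟩_H`, i.e. `Q u v = ⟪ι v, L u⟫_H`.
Conclusions: (i) `L : D → H` is bijective; (ii) `D` is dense in `𝒱` and in
`H`; (iii) `L` is closed. -/
theorem stmt9 {𝒱 H : Type*} [NormedAddCommGroup 𝒱] [InnerProductSpace ℂ 𝒱]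
    [CompleteSpace 𝒱] [NormedAddCommGroup H] [InnerProductSpace ℂ H]
    [CompleteSpace H]
    (ι : 𝒱 →L[ℂ] H) (hι : Function.Injective ι) (hdense : DenseRange ι)
    (Q : 𝒱 →L[ℂ] (𝒱 →SL[starRingEnd ℂ] ℂ))
    (Φ₁ Φ₂ : 𝒱 →L[ℂ] 𝒱) (α : ℝ) (hα : 0 < α)
    (h1 : ∀ u : 𝒱, ‖Q u u‖ + ‖Q (Φ₁ u) u‖ ≥ α * ‖u‖ ^ 2)
    (h2 : ∀ u : 𝒱, ‖Q u u‖ + ‖Q u (Φ₂ u)‖ ≥ α * ‖u‖ ^ 2)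
    (Φ₁H Φ₂H : H →L[ℂ] H)
    (hΦ₁ : ∀ u : 𝒱, Φ₁H (ι u) = ι (Φ₁ u))
    (hΦ₂ : ∀ u : 𝒱, Φ₂H (ι u) = ι (Φ₂ u)) :
    -- (i) `L : Dom(L) → H` is bijective:
    (∀ f : H, ∃! u : 𝒱, ∀ v : 𝒱, Q u v = ⟪ι v, f⟫_ℂ) ∧
    -- (ii) `Dom(L)` is dense in `𝒱` and in `H`:
    Dense {u : 𝒱 | ∃ f : H, ∀ v : 𝒱, Q u v = ⟪ι v, f⟫_ℂ} ∧
    Dense {h : H | ∃ u : 𝒱, ι u = h ∧ ∃ f : H, ∀ v : 𝒱, Q u v = ⟪ι v, f⟫_ℂ} ∧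
    -- (iii) `L` is closed (its graph is closed in `H × H`):
    IsClosed {p : H × H | ∃ u : 𝒱, ι u = p.1 ∧ ∀ v : 𝒱, Q u v = ⟪ι v, p.2⟫_ℂ} :=
  stmt9_general ι hι hdense Q Φ₁ Φ₂ α hα h1 h2
end
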